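/- arXiv:1701.03170 — 4 statements merged into one kernel-verified Lean document; each statement's English description precedes it below -/
import Mathlib

section
/- For every 0 < σ < 2, n ≥ 1, y > 0 and λ > 0, the tail mass of the Cauchy–Poisson kernel satisfies ∫_{|x| ≥ λ} P^σ_y(x) dx ≤ 2^{(n+σ)/2} (λ/y)^{-σ}, where P^σ_y(x) = I(σ)^{-1} y^σ (y²+|x|²)^{-(n+σ)/2} and I(σ) = ω_n ∫₀^∞ (1+ρ²)^{-(n+σ)/2} ρ^{n-1} dρ. -/
open MeasureTheory Real Filter Set

/-! In polar coordinates the tail mass is `y^σ K / J` with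
`J = ∫₀^∞ (1+ρ²)^{-(n+σ)/2} ρ^{n-1} dρ` and `K = ∫_λ^∞ (y²+r²)^{-(n+σ)/2} r^{n-1} dr`, the factor
`ω` cancelling against `I = ω J`. Dropping `y²` gives `K ≤ ∫_λ^∞ r^{-1-σ} dr = λ^{-σ}/σ`, and
`1 + ρ² ≤ 2ρ²` for `ρ ≥ 1` gives `J ≥ 2^{-(n+σ)/2} ∫_1^∞ ρ^{-1-σ} dρ = 2^{-(n+σ)/2}/σ`. -/

section Polar

variable {E F : Type*} [NormedAddCommGroup E] [NormedSpace ℝ E] [Nontrivial E]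
  [FiniteDimensional ℝ E] [MeasurableSpace E] [BorelSpace E]
  [NormedAddCommGroup F] [NormedSpace ℝ F]

theorem setIntegral_le_norm_fun_norm_addHaar (μ : Measure E) [μ.IsAddHaarMeasure]
    (f : ℝ → F) {a : ℝ} (ha : 0 < a) :
    ∫ x in {x : E | a ≤ ‖x‖}, f ‖x‖ ∂μ = Module.finrank ℝ E • μ.real (Metric.ball 0 1) •
      ∫ r in Ici a, r ^ (Module.finrank ℝ E - 1) • f r := by
  rw [← integral_indicator (measurableSet_le measurable_const measurable_norm)]
  change ∫ x, (Ici a).indicator f ‖x‖ ∂μ = _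
  rw [integral_fun_norm_addHaar μ, ← indicator_smul, setIntegral_indicator measurableSet_Ici,
    inter_eq_right.mpr (Ici_subset_Ioi.mpr ha)]

end Polar

section Radial

variable {n : ℕ} {σ : ℝ}

theorem sq_rpow_mul_pow_eq (hn : 1 ≤ n) {ρ : ℝ} (hρ : 0 < ρ) :
    (ρ ^ 2) ^ (-((n : ℝ) + σ) / 2) * ρ ^ (n - 1) = ρ ^ (-1 - σ) := by
  rw [← rpow_natCast ρ 2, ← rpow_mul hρ.le, ← rpow_natCast ρ (n - 1), ← rpow_add hρ,
    Nat.cast_sub hn, Nat.cast_one]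
  congr 1
  push_cast
  ring

theorem add_sq_rpow_mul_pow_le (hn : 1 ≤ n) (hnσ : 0 ≤ (n : ℝ) + σ) {c ρ : ℝ} (hc : 0 ≤ c)
    (hρ : 0 < ρ) : (c + ρ ^ 2) ^ (-((n : ℝ) + σ) / 2) * ρ ^ (n - 1) ≤ ρ ^ (-1 - σ) := by
  rw [← sq_rpow_mul_pow_eq hn hρ]
  refine mul_le_mul_of_nonneg_right ?_ (by positivity)
  exact rpow_le_rpow_of_nonpos (by positivity) (by linarith) (by linarith)

theorem two_rpow_mul_rpow_le_one_add_sq_rpow_mul_pow (hn : 1 ≤ n) (hnσ : 0 ≤ (n : ℝ) + σ)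
    {ρ : ℝ} (hρ : 1 ≤ ρ) :
    (2 : ℝ) ^ (-((n : ℝ) + σ) / 2) * ρ ^ (-1 - σ) ≤
      (1 + ρ ^ 2) ^ (-((n : ℝ) + σ) / 2) * ρ ^ (n - 1) := by
  have hρ0 : 0 < ρ := one_pos.trans_le hρ
  rw [← sq_rpow_mul_pow_eq hn hρ0, ← mul_assoc, ← mul_rpow zero_le_two (by positivity)]
  refine mul_le_mul_of_nonneg_right ?_ (by positivity)
  exact rpow_le_rpow_of_nonpos (by positivity) (by nlinarith) (by linarith)

theorem integrableOn_Ioi_add_sq_rpow_mul_pow (hn : 1 ≤ n) (hσ : 0 < σ) {c : ℝ} (hc : 0 < c) :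
    IntegrableOn (fun ρ : ℝ => (c + ρ ^ 2) ^ (-((n : ℝ) + σ) / 2) * ρ ^ (n - 1)) (Ioi 0) := by
  have hcont : Continuous fun ρ : ℝ => (c + ρ ^ 2) ^ (-((n : ℝ) + σ) / 2) * ρ ^ (n - 1) :=
    ((continuous_const.add (continuous_pow 2)).rpow_const
      fun ρ => Or.inl (by positivity : c + ρ ^ 2 ≠ 0)).mul (continuous_pow _)
  rw [← Ioc_union_Ioi_eq_Ioi zero_le_one]
  refine hcont.integrableOn_Ioc.union <| Integrable.mono'
    (integrableOn_Ioi_rpow_of_lt (by linarith : -1 - σ < -1) one_pos) hcont.aestronglyMeasurable ?_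
  filter_upwards [ae_restrict_mem measurableSet_Ioi] with ρ (hρ : 1 < ρ)
  rw [norm_of_nonneg (by positivity)]
  exact add_sq_rpow_mul_pow_le hn (by positivity) hc.le (by linarith)

theorem two_rpow_div_le_integral_Ioi_one_add_sq_rpow_mul_pow (hn : 1 ≤ n) (hσ : 0 < σ) :
    (2 : ℝ) ^ (-((n : ℝ) + σ) / 2) / σ ≤
      ∫ ρ in Ioi 0, (1 + ρ ^ 2) ^ (-((n : ℝ) + σ) / 2) * ρ ^ (n - 1) := by
  have hint := integrableOn_Ioi_add_sq_rpow_mul_pow hn hσ one_pos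
  calc (2 : ℝ) ^ (-((n : ℝ) + σ) / 2) / σ
      = ∫ ρ in Ioi 1, (2 : ℝ) ^ (-((n : ℝ) + σ) / 2) * ρ ^ (-1 - σ) := by
        rw [integral_const_mul, integral_Ioi_rpow_of_lt (by linarith) one_pos, one_rpow,
          (by ring : -1 - σ + 1 = -σ)]
        field_simp
    _ ≤ ∫ ρ in Ioi 1, (1 + ρ ^ 2) ^ (-((n : ℝ) + σ) / 2) * ρ ^ (n - 1) :=
        setIntegral_mono_on
          ((integrableOn_Ioi_rpow_of_lt (by linarith) one_pos).const_mul _)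
          (hint.mono_set (Ioi_subset_Ioi zero_le_one)) measurableSet_Ioi
          fun ρ hρ => two_rpow_mul_rpow_le_one_add_sq_rpow_mul_pow hn (by positivity) hρ.le
    _ ≤ ∫ ρ in Ioi 0, (1 + ρ ^ 2) ^ (-((n : ℝ) + σ) / 2) * ρ ^ (n - 1) :=
        setIntegral_mono_set hint
          (ae_restrict_of_forall_mem measurableSet_Ioi fun ρ (hρ : 0 < ρ) => by positivity)
          (Ioi_subset_Ioi zero_le_one).eventuallyLE

theorem integral_Ici_add_sq_rpow_mul_pow_le (hn : 1 ≤ n) (hσ : 0 < σ) {c a : ℝ} (hc : 0 < c)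
    (ha : 0 < a) :
    ∫ r in Ici a, (c + r ^ 2) ^ (-((n : ℝ) + σ) / 2) * r ^ (n - 1) ≤ a ^ (-σ) / σ := by
  rw [integral_Ici_eq_integral_Ioi]
  calc ∫ r in Ioi a, (c + r ^ 2) ^ (-((n : ℝ) + σ) / 2) * r ^ (n - 1)
      ≤ ∫ r in Ioi a, r ^ (-1 - σ) :=
        setIntegral_mono_on
          ((integrableOn_Ioi_add_sq_rpow_mul_pow hn hσ hc).mono_set (Ioi_subset_Ioi ha.le))
          (integrableOn_Ioi_rpow_of_lt (by linarith) ha) measurableSet_Ioi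
          fun r hr => add_sq_rpow_mul_pow_le hn (by positivity) hc.le (ha.trans hr)
    _ = a ^ (-σ) / σ := by
        rw [integral_Ioi_rpow_of_lt (by linarith) ha, (by ring : -1 - σ + 1 = -σ)]
        field_simp

end Radial

/-- tail mass estimate for the Cauchy–Poisson kernel:
`∫_{|x| ≥ λ} P^σ_y(x) dx ≤ 2^{(n+σ)/2} (λ/y)^{-σ}`. Here `ω_n` is the surface area of the
unit sphere in `ℝⁿ`, `I(σ) = ω_n ∫₀^∞ (1+ρ²)^{-(n+σ)/2} ρ^{n-1} dρ` and
`P^σ_y(x) = I(σ)⁻¹ y^σ (y²+|x|²)^{-(n+σ)/2}`. -/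
theorem stmt4 (n : ℕ) (hn : 1 ≤ n) (σ : ℝ) (hσ : σ ∈ Ioo (0:ℝ) 2)
    (y : ℝ) (hy : 0 < y) (lam : ℝ) (hlam : 0 < lam)
    (ω : ℝ)
    (hω : ω = (n : ℝ) * (volume (Metric.ball (0 : EuclideanSpace ℝ (Fin n)) 1)).toReal)
    (I : ℝ) (hI : I = ω * ∫ ρ in Ioi (0:ℝ), (1 + ρ^2) ^ (-((n:ℝ) + σ)/2) * ρ^(n-1))
    (P : EuclideanSpace ℝ (Fin n) → ℝ)
    (hP : ∀ x, P x = I⁻¹ * y ^ σ * (y^2 + ‖x‖^2) ^ (-((n:ℝ) + σ)/2)) :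
    (∫ x in {x : EuclideanSpace ℝ (Fin n) | lam ≤ ‖x‖}, P x)
      ≤ (2:ℝ) ^ (((n:ℝ) + σ)/2) * (lam / y) ^ (-σ) := by
  obtain ⟨hσ0, -⟩ := hσ
  have : Nontrivial (EuclideanSpace ℝ (Fin n)) :=
    Module.nontrivial_of_finrank_pos (R := ℝ) (by rw [finrank_euclideanSpace_fin]; omega)
  have hω0 : 0 < ω := hω ▸ mul_pos (by exact_mod_cast hn)
    (ENNReal.toReal_pos (Metric.measure_ball_pos _ _ one_pos).ne' measure_ball_lt_top.ne)
  have hJ := two_rpow_div_le_integral_Ioi_one_add_sq_rpow_mul_pow hn hσ0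
  have hK := integral_Ici_add_sq_rpow_mul_pow_le hn hσ0 (pow_pos hy 2) hlam
  set J := ∫ ρ in Ioi (0:ℝ), (1 + ρ ^ 2) ^ (-((n:ℝ) + σ) / 2) * ρ ^ (n - 1)
  set K := ∫ r in Ici lam, (y ^ 2 + r ^ 2) ^ (-((n:ℝ) + σ) / 2) * r ^ (n - 1)
  have hK0 : 0 ≤ K := setIntegral_nonneg measurableSet_Ici fun r (hr : lam ≤ r) => by
    have := hlam.trans_le hr; positivity
  have hmass : ∫ x in {x : EuclideanSpace ℝ (Fin n) | lam ≤ ‖x‖}, P x = y ^ σ / J * K := by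
    simp_rw [hP]
    rw [setIntegral_le_norm_fun_norm_addHaar volume
      (fun r => I⁻¹ * y ^ σ * (y ^ 2 + r ^ 2) ^ (-((n:ℝ) + σ) / 2)) hlam]
    simp_rw [finrank_euclideanSpace_fin, smul_eq_mul, mul_comm (_ ^ (n - 1)) (I⁻¹ * _ * _),
      mul_assoc]
    rw [integral_const_mul, integral_const_mul, nsmul_eq_mul, ← mul_assoc, measureReal_def, ← hω,
      hI, mul_inv, mul_assoc ω⁻¹, mul_inv_cancel_left₀ hω0.ne']
    ring
  calc _ = y ^ σ / J * K := hmass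
    _ ≤ y ^ σ / ((2:ℝ) ^ (-((n:ℝ) + σ) / 2) / σ) * (lam ^ (-σ) / σ) := by gcongr
    _ = _ := by
      rw [div_rpow hlam.le hy.le, rpow_neg hy.le, rpow_neg hlam.le, neg_div,
        rpow_neg zero_le_two]
      field_simp
end

section
/- If Σ : (0,∞) → (0,2) satisfies Σ(y)·log y → -∞ as y → 0⁺ (equivalently y^{Σ(y)} → 0), then the family of Cauchy–Poisson kernels {P^{Σ(y)}_y : y > 0} concentrates at the origin: for every λ > 0, ∫_{|x| ≥ λ} P^{Σ(y)}_y(x) dx → 0 as y → 0⁺. -/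
/-!
Pulling out the normalisation, the tail of `P^σ_y` is at most `y^σ / I(σ)` times
`∫_{|x| ≥ λ} |x|^{-(n+σ)} dx = ω λ^{-σ} / σ` (polar coordinates), while comparing
`1 + |x|²` with `2|x|²` outside the unit ball gives `I(σ) ≥ ω 2^{-(n+σ)/2} / σ`.
The factors `1/σ` cancel, so the tail is at most `2^{(n+σ)/2} (λ/y)^{-σ}`, uniformly
in `σ ∈ (0,2)`; for `σ = Σ(y)` this is `O(exp (Σ(y) log y)) → 0`.
-/

open MeasureTheory Real Filter Set

open Module Metric

theorem sq_rpow_neg_div_two {a : ℝ} (ha : 0 ≤ a) (r : ℝ) : (a ^ 2) ^ (-r / 2) = a ^ (-r) := by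
  rw [← rpow_natCast, ← rpow_mul ha]
  norm_num [mul_div_cancel₀]

theorem measurableSet_le_norm {E : Type*} [NormedAddCommGroup E] [MeasurableSpace E]
    [OpensMeasurableSpace E] (lam : ℝ) : MeasurableSet {x : E | lam ≤ ‖x‖} :=
  measurableSet_le measurable_const measurable_norm

theorem measureReal_ball_pos {X : Type*} [PseudoMetricSpace X] [ProperSpace X]
    [MeasurableSpace X] (μ : Measure X) [μ.IsOpenPosMeasure] [IsFiniteMeasureOnCompacts μ]
    (x : X) {r : ℝ} (hr : 0 < r) : 0 < μ.real (ball x r) :=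
  ENNReal.toReal_pos (measure_ball_pos μ x hr).ne' measure_ball_lt_top.ne

section HaarSpace

variable {E : Type*} [NormedAddCommGroup E] [NormedSpace ℝ E] [Nontrivial E]
  [FiniteDimensional ℝ E] [MeasurableSpace E] [BorelSpace E] (μ : Measure E)
  [μ.IsAddHaarMeasure]

theorem integral_one_add_norm_sq_rpow (s : ℝ) :
    ∫ x, (1 + ‖x‖ ^ 2) ^ s ∂μ = finrank ℝ E * μ.real (ball 0 1) *
      ∫ ρ in Ioi (0 : ℝ), (1 + ρ ^ 2) ^ s * ρ ^ (finrank ℝ E - 1) := by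
  rw [integral_fun_norm_addHaar μ (fun ρ => (1 + ρ ^ 2) ^ s), nsmul_eq_mul, smul_eq_mul,
    mul_assoc]
  simp_rw [smul_eq_mul, mul_comm (_ ^ (finrank ℝ E - 1))]

theorem setIntegral_norm_rpow_neg {σ lam : ℝ} (hσ : 0 < σ) (hlam : 0 < lam) :
    ∫ x in {x : E | lam ≤ ‖x‖}, ‖x‖ ^ (-(finrank ℝ E + σ)) ∂μ =
      finrank ℝ E * μ.real (ball 0 1) * (lam ^ (-σ) / σ) := by
  have hd : 1 ≤ finrank ℝ E := finrank_pos
  rw [← integral_indicator (measurableSet_le_norm lam)]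
  change ∫ x, (Ici lam).indicator (fun ρ => ρ ^ (-(finrank ℝ E + σ))) ‖x‖ ∂μ = _
  rw [integral_fun_norm_addHaar μ, nsmul_eq_mul, smul_eq_mul, mul_assoc]
  congr 2
  calc ∫ ρ in Ioi (0 : ℝ),
        ρ ^ (finrank ℝ E - 1) • (Ici lam).indicator (fun ρ => ρ ^ (-(finrank ℝ E + σ))) ρ
      = ∫ ρ in Ioi (0 : ℝ), (Ici lam).indicator (fun ρ => ρ ^ (-1 - σ)) ρ := by
        refine setIntegral_congr_fun measurableSet_Ioi fun ρ (hρ0 : 0 < ρ) => ?_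
        by_cases hρ : lam ≤ ρ
        · simp only [indicator, mem_Ici, hρ, if_true, smul_eq_mul]
          rw [← rpow_natCast, Nat.cast_sub hd, Nat.cast_one, ← rpow_add hρ0]
          ring_nf
        · simp [indicator, hρ]
    _ = ∫ ρ in Ioi lam, ρ ^ (-1 - σ) := by
        rw [setIntegral_indicator measurableSet_Ici,
          inter_eq_right.mpr (Ici_subset_Ioi.mpr hlam), integral_Ici_eq_integral_Ioi]
    _ = lam ^ (-σ) / σ := by
        rw [integral_Ioi_rpow_of_lt (by linarith) hlam]
        ring_nf

theorem integrableOn_norm_rpow_neg {σ lam : ℝ} (hσ : 0 < σ) (hlam : 0 < lam) :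
    IntegrableOn (fun x : E => ‖x‖ ^ (-(finrank ℝ E + σ))) {x | lam ≤ ‖x‖} μ := by
  refine Integrable.of_integral_ne_zero ?_
  rw [setIntegral_norm_rpow_neg μ hσ hlam]
  have := measureReal_ball_pos μ (0 : E) one_pos
  have : 0 < finrank ℝ E := finrank_pos
  positivity

theorem setIntegral_sq_add_norm_sq_rpow_le {σ lam : ℝ} (hσ : 0 < σ) (hlam : 0 < lam)
    (y : ℝ) :
    ∫ x in {x : E | lam ≤ ‖x‖}, (y ^ 2 + ‖x‖ ^ 2) ^ (-(finrank ℝ E + σ) / 2) ∂μ ≤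
      finrank ℝ E * μ.real (ball 0 1) * (lam ^ (-σ) / σ) := by
  rw [← setIntegral_norm_rpow_neg μ hσ hlam]
  refine integral_mono_of_nonneg (ae_of_all _ fun x => by positivity)
    (integrableOn_norm_rpow_neg μ hσ hlam) ?_
  filter_upwards [ae_restrict_mem (measurableSet_le_norm lam)] with x (hx : lam ≤ ‖x‖)
  rw [← sq_rpow_neg_div_two (norm_nonneg x)]
  have : 0 < ‖x‖ := hlam.trans_le hx
  exact rpow_le_rpow_of_nonpos (by positivity) (by linarith [sq_nonneg y])
    (by linarith [(finrank ℝ E).cast_nonneg (α := ℝ)])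

theorem le_integral_one_add_norm_sq_rpow {σ : ℝ} (hσ : 0 < σ) :
    finrank ℝ E * μ.real (ball 0 1) * (2 ^ (-(finrank ℝ E + σ) / 2) / σ) ≤
      ∫ x, (1 + ‖x‖ ^ 2) ^ (-(finrank ℝ E + σ) / 2) ∂μ := by
  have hr : 0 ≤ (finrank ℝ E : ℝ) + σ := by positivity
  calc finrank ℝ E * μ.real (ball 0 1) * (2 ^ (-(finrank ℝ E + σ) / 2) / σ)
      = ∫ x in {x : E | 1 ≤ ‖x‖},
          2 ^ (-(finrank ℝ E + σ) / 2) * ‖x‖ ^ (-(finrank ℝ E + σ)) ∂μ := by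
        rw [integral_const_mul, setIntegral_norm_rpow_neg μ hσ one_pos, one_rpow]
        ring
    _ ≤ ∫ x in {x : E | 1 ≤ ‖x‖}, (1 + ‖x‖ ^ 2) ^ (-(finrank ℝ E + σ) / 2) ∂μ := by
        refine setIntegral_mono_on
          ((integrableOn_norm_rpow_neg μ hσ one_pos).const_mul _)
          (integrable_rpow_neg_one_add_norm_sq (by linarith)).integrableOn
          (measurableSet_le_norm 1) fun x (hx : 1 ≤ ‖x‖) => ?_
        rw [← sq_rpow_neg_div_two (norm_nonneg x), ← mul_rpow zero_le_two (by positivity)]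
        exact rpow_le_rpow_of_nonpos (by positivity) (by nlinarith) (by linarith)
    _ ≤ ∫ x, (1 + ‖x‖ ^ 2) ^ (-(finrank ℝ E + σ) / 2) ∂μ :=
        setIntegral_le_integral (integrable_rpow_neg_one_add_norm_sq (by linarith))
          (ae_of_all _ fun x => by positivity)

end HaarSpace

/-- The normalisation is `I(σ) = ∫ (1 + |z|²)^{-(n+σ)/2} dz`, which equals
`ω ∫₀^∞ (1 + ρ²)^{-(n+σ)/2} ρ^{n-1} dρ` by `integral_one_add_norm_sq_rpow`. -/
noncomputable def cauchyPoissonKernel {E : Type*} [NormedAddCommGroup E] [NormedSpace ℝ E]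
    [MeasurableSpace E] (μ : Measure E) (σ y : ℝ) (x : E) : ℝ :=
  (∫ z, (1 + ‖z‖ ^ 2) ^ (-(finrank ℝ E + σ) / 2) ∂μ)⁻¹ * y ^ σ *
    (y ^ 2 + ‖x‖ ^ 2) ^ (-(finrank ℝ E + σ) / 2)

section CauchyPoisson

variable {E : Type*} [NormedAddCommGroup E] [NormedSpace ℝ E] [MeasurableSpace E]
  (μ : Measure E)

theorem cauchyPoissonKernel_nonneg (σ : ℝ) {y : ℝ} (hy : 0 ≤ y) (x : E) :
    0 ≤ cauchyPoissonKernel μ σ y x := by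
  have : 0 ≤ ∫ z, (1 + ‖z‖ ^ 2) ^ (-(finrank ℝ E + σ) / 2) ∂μ :=
    integral_nonneg fun z => by positivity
  unfold cauchyPoissonKernel
  positivity

variable [Nontrivial E] [FiniteDimensional ℝ E] [BorelSpace E] [μ.IsAddHaarMeasure]

theorem setIntegral_cauchyPoissonKernel_le {σ y lam : ℝ} (hσ : 0 < σ) (hy : 0 < y)
    (hlam : 0 < lam) :
    ∫ x in {x : E | lam ≤ ‖x‖}, cauchyPoissonKernel μ σ y x ∂μ ≤
      2 ^ ((finrank ℝ E + σ) / 2) * (lam / y) ^ (-σ) := by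
  set c := finrank ℝ E * μ.real (ball 0 1) / σ
  have hc : 0 < c := by
    have := measureReal_ball_pos μ (0 : E) one_pos
    have : 0 < finrank ℝ E := finrank_pos
    positivity
  have hI : c * 2 ^ (-(finrank ℝ E + σ) / 2) ≤
      ∫ z, (1 + ‖z‖ ^ 2) ^ (-(finrank ℝ E + σ) / 2) ∂μ := by
    convert le_integral_one_add_norm_sq_rpow μ hσ using 1
    ring
  have hT :
      ∫ x in {x : E | lam ≤ ‖x‖}, (y ^ 2 + ‖x‖ ^ 2) ^ (-(finrank ℝ E + σ) / 2) ∂μ ≤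
        c * lam ^ (-σ) := by
    convert setIntegral_sq_add_norm_sq_rpow_le μ hσ hlam y using 1
    ring
  unfold cauchyPoissonKernel
  rw [integral_const_mul]
  calc _ ≤ (c * 2 ^ (-(finrank ℝ E + σ) / 2))⁻¹ * y ^ σ * (c * lam ^ (-σ)) := by
        gcongr
    _ = 2 ^ ((finrank ℝ E + σ) / 2) * (lam / y) ^ (-σ) := by
        rw [div_rpow hlam.le hy.le, rpow_neg hy.le σ, neg_div, rpow_neg zero_le_two]
        field_simp

end CauchyPoisson

theorem two_rpow_mul_div_rpow_neg_le {d σ lam y : ℝ} (hσ : σ ∈ Ioo 0 2) (hlam : 0 < lam)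
    (hy : 0 < y) :
    2 ^ ((d + σ) / 2) * (lam / y) ^ (-σ) ≤
      2 ^ ((d + 2) / 2) * exp (σ * log y + 2 * |log lam|) := by
  obtain ⟨hσ0, hσ2⟩ := hσ
  rw [rpow_def_of_pos (div_pos hlam hy), log_div hlam.ne' hy.ne']
  gcongr
  · exact one_le_two
  · nlinarith [neg_abs_le (log lam), le_abs_self (log lam), abs_nonneg (log lam)]

/-- if `Σ : (0,∞) → (0,2)` satisfies `Σ(y)·log y → -∞` as `y → 0⁺`, then the
Cauchy–Poisson family `{P^{Σ(y)}_y}` concentrates at the origin: for every `λ > 0`,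
`∫_{|x| ≥ λ} P^{Σ(y)}_y(x) dx → 0` as `y → 0⁺`. -/
theorem stmt5 (n : ℕ) (hn : 1 ≤ n)
    (ω : ℝ)
    (hω : ω = (n : ℝ) * (volume (Metric.ball (0 : EuclideanSpace ℝ (Fin n)) 1)).toReal)
    (I : ℝ → ℝ)
    (hI : ∀ σ, I σ = ω * ∫ ρ in Ioi (0:ℝ), (1 + ρ^2) ^ (-((n:ℝ) + σ)/2) * ρ^(n-1))
    (P : ℝ → ℝ → EuclideanSpace ℝ (Fin n) → ℝ)
    (hP : ∀ σ y x, P σ y x = (I σ)⁻¹ * y ^ σ * (y^2 + ‖x‖^2) ^ (-((n:ℝ) + σ)/2))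
    (S : ℝ → ℝ) (hS : ∀ y, 0 < y → S y ∈ Ioo (0:ℝ) 2)
    (hlim : Tendsto (fun y => S y * Real.log y) (nhdsWithin 0 (Ioi 0)) atBot) :
    ∀ lam : ℝ, 0 < lam →
      Tendsto (fun y => ∫ x in {x : EuclideanSpace ℝ (Fin n) | lam ≤ ‖x‖}, P (S y) y x)
        (nhdsWithin 0 (Ioi 0)) (nhds 0) := by
  intro lam hlam
  have : Nonempty (Fin n) := ⟨⟨0, hn⟩⟩
  have hK : P = cauchyPoissonKernel (volume : Measure (EuclideanSpace ℝ (Fin n))) := by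
    ext σ y x
    rw [hP, hI, hω, cauchyPoissonKernel, integral_one_add_norm_sq_rpow,
      finrank_euclideanSpace_fin]
    rfl
  subst hK
  have hbound : ∀ y ∈ Ioi (0 : ℝ),
      ∫ x in {x : EuclideanSpace ℝ (Fin n) | lam ≤ ‖x‖}, cauchyPoissonKernel volume (S y) y x ≤
        2 ^ ((n + 2 : ℝ) / 2) * exp (S y * log y + 2 * |log lam|) := fun y hy => by
    have := setIntegral_cauchyPoissonKernel_le (E := EuclideanSpace ℝ (Fin n)) volume
      (hS y hy).1 hy hlam
    rw [finrank_euclideanSpace_fin] at this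
    exact this.trans (two_rpow_mul_div_rpow_neg_le (hS y hy) hlam hy)
  refine squeeze_zero' (eventually_nhdsWithin_of_forall fun y (hy : 0 < y) => ?_)
    (eventually_nhdsWithin_of_forall hbound) ?_
  · exact setIntegral_nonneg (measurableSet_le_norm lam) fun x _ =>
      cauchyPoissonKernel_nonneg volume _ hy.le x
  · simpa using (tendsto_exp_atBot.comp (tendsto_atBot_add_const_right _ _ hlim)).const_mul
      (2 ^ ((n + 2 : ℝ) / 2))
end

section
/- There is a constant C > 0, independent of σ ∈ (0,2) and ρ > 0, such that ρ² ∫₀^∞ e^{-t^σ} t sin(ρt) dt ≤ C (and the improper integral converges). -/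
/-!
With `f t = exp (-t ^ σ) * t`, the function `-ρ f(t) cos(ρt) + f'(t) sin(ρt)` is an
antiderivative of `(ρ² f + f'') sin(ρt)` vanishing at `0` and at `∞`, so
`ρ² ∫₀^∞ f(t) sin(ρt) dt = -∫₀^∞ f''(t) sin(ρt) dt`. Both terms of `|f''|` integrate, after the
substitution `u = t ^ σ`, to Gamma values, giving the bound `1 + 2σ < 5`.
-/

open MeasureTheory Real Filter Set Topology

theorem MeasureTheory.IntegrableOn.mul_sin {g : ℝ → ℝ} {s : Set ℝ} (hg : IntegrableOn g s)
    (ρ : ℝ) :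
    IntegrableOn (fun t => g t * sin (ρ * t)) s :=
  hg.mul_bdd (c := 1) (by fun_prop : Continuous fun t => sin (ρ * t)).aestronglyMeasurable
    (ae_of_all _ fun t => by simpa using abs_sin_le_one (ρ * t))

theorem sq_mul_integral_mul_sin_eq {f f' f'' : ℝ → ℝ} (ρ : ℝ)
    (hfc : ContinuousWithinAt f (Ici 0) 0)
    (hf'c : ContinuousWithinAt f' (Ici 0) 0) (hf : ∀ x ∈ Ioi 0, HasDerivAt f (f' x) x)
    (hf' : ∀ x ∈ Ioi 0, HasDerivAt f' (f'' x) x) (hf_top : Tendsto f atTop (𝓝 0))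
    (hf'_top : Tendsto f' atTop (𝓝 0)) (hf_int : IntegrableOn f (Ioi 0))
    (hf''_int : IntegrableOn f'' (Ioi 0)) :
    ρ ^ 2 * ∫ t in Ioi 0, f t * sin (ρ * t) = ρ * f 0 - ∫ t in Ioi 0, f'' t * sin (ρ * t) := by
  set G : ℝ → ℝ := fun t => -(ρ * (f t * cos (ρ * t))) + f' t * sin (ρ * t)
  have hG : ∀ x ∈ Ioi 0, HasDerivAt G (ρ ^ 2 * (f x * sin (ρ * x)) + f'' x * sin (ρ * x)) x := by
    intro x hx
    have hcos := ((hasDerivAt_id x).const_mul ρ).cos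
    have hsin := ((hasDerivAt_id x).const_mul ρ).sin
    refine ((((hf x hx).mul hcos).const_mul ρ).neg.add ((hf' x hx).mul hsin)).congr_deriv ?_
    simp only [id]
    ring
  have hG0 : ContinuousWithinAt G (Ici 0) 0 := by
    have : Continuous fun t => ρ * t := by fun_prop
    exact ((hfc.mul (continuous_cos.comp this).continuousWithinAt).const_mul ρ).neg.add
      (hf'c.mul (continuous_sin.comp this).continuousWithinAt)
  have hG_top : Tendsto G atTop (𝓝 0) := by
    have hcos : IsBoundedUnder (· ≤ ·) atTop fun t => ‖cos (ρ * t)‖ :=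
      isBoundedUnder_of ⟨1, fun t => by simpa using abs_cos_le_one (ρ * t)⟩
    have hsin : IsBoundedUnder (· ≤ ·) atTop fun t => ‖sin (ρ * t)‖ :=
      isBoundedUnder_of ⟨1, fun t => by simpa using abs_sin_le_one (ρ * t)⟩
    simpa using ((hf_top.zero_mul_isBoundedUnder_le hcos).const_mul ρ).neg.add
      (hf'_top.zero_mul_isBoundedUnder_le hsin)
  have h1 := (hf_int.mul_sin ρ).const_mul (ρ ^ 2)
  have h2 := hf''_int.mul_sin ρ
  have := integral_Ioi_of_hasDerivAt_of_tendsto hG0 hG (h1.add h2) hG_top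
  rw [integral_add h1 h2, integral_const_mul] at this
  simp only [G, mul_zero, cos_zero, sin_zero] at this
  linarith

section StretchedExponential

variable {σ : ℝ}

theorem hasDerivAt_exp_neg_rpow {x : ℝ} (hx : 0 < x) :
    HasDerivAt (fun t => exp (-(t ^ σ))) (-(σ * x ^ (σ - 1)) * exp (-(x ^ σ))) x := by
  have h : HasDerivAt (fun t => -(t ^ σ)) (-(σ * x ^ (σ - 1))) x :=
    (Real.hasDerivAt_rpow_const (Or.inl hx.ne')).neg
  exact h.exp.congr_deriv (mul_comm _ _)

theorem hasDerivAt_exp_neg_rpow_mul_self {x : ℝ} (hx : 0 < x) :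
    HasDerivAt (fun t => exp (-(t ^ σ)) * t) (exp (-(x ^ σ)) * (1 - σ * x ^ σ)) x := by
  refine ((hasDerivAt_exp_neg_rpow hx).mul (hasDerivAt_id x)).congr_deriv ?_
  rw [id, rpow_sub_one hx.ne']
  field_simp
  ring

theorem hasDerivAt_exp_neg_rpow_mul_one_sub {x : ℝ} (hx : 0 < x) :
    HasDerivAt (fun t => exp (-(t ^ σ)) * (1 - σ * t ^ σ))
      (σ ^ 2 * (x ^ (2 * σ - 1) * exp (-(x ^ σ))) -
        σ * (1 + σ) * (x ^ (σ - 1) * exp (-(x ^ σ)))) x := by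
  have hpow := Real.hasDerivAt_rpow_const (p := σ) (Or.inl hx.ne')
  refine ((hasDerivAt_exp_neg_rpow hx).mul ((hpow.const_mul σ).const_sub 1)).congr_deriv ?_
  rw [show 2 * σ - 1 = (σ - 1) + σ by ring, rpow_add hx]
  ring

theorem tendsto_rpow_mul_exp_neg_rpow_atTop (s : ℝ) (hσ : 0 < σ) :
    Tendsto (fun t => t ^ s * exp (-(t ^ σ))) atTop (𝓝 0) := by
  refine ((tendsto_rpow_mul_exp_neg_mul_atTop_nhds_zero (s / σ) 1 one_pos).comp
    (tendsto_rpow_atTop hσ)).congr' ?_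
  filter_upwards [eventually_gt_atTop 0] with t ht
  simp only [Function.comp, ← rpow_mul ht.le, mul_div_cancel₀ s hσ.ne', neg_one_mul]

theorem integrableOn_exp_neg_rpow_mul_self (hσ : 0 < σ) :
    IntegrableOn (fun t => exp (-(t ^ σ)) * t) (Ioi 0) :=
  (integrableOn_rpow_mul_exp_neg_rpow (s := 1) (by norm_num) hσ).congr_fun
    (fun t _ => by dsimp only; rw [rpow_one, mul_comm]) measurableSet_Ioi

theorem integrableOn_exp_neg_rpow_deriv2 (hσ : 0 < σ) :
    IntegrableOn (fun t => σ ^ 2 * (t ^ (2 * σ - 1) * exp (-(t ^ σ))) -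
      σ * (1 + σ) * (t ^ (σ - 1) * exp (-(t ^ σ)))) (Ioi 0) :=
  ((integrableOn_rpow_mul_exp_neg_rpow (by linarith) hσ).const_mul _).sub
    ((integrableOn_rpow_mul_exp_neg_rpow (by linarith) hσ).const_mul _)

theorem abs_integral_exp_neg_rpow_deriv2_mul_sin_le (hσ : 0 < σ) (ρ : ℝ) :
    |∫ t in Ioi 0, (σ ^ 2 * (t ^ (2 * σ - 1) * exp (-(t ^ σ))) -
        σ * (1 + σ) * (t ^ (σ - 1) * exp (-(t ^ σ)))) * sin (ρ * t)| ≤ 1 + 2 * σ := by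
  have hA := (integrableOn_rpow_mul_exp_neg_rpow (s := 2 * σ - 1) (by linarith) hσ).const_mul
    (σ ^ 2)
  have hB := (integrableOn_rpow_mul_exp_neg_rpow (s := σ - 1) (by linarith) hσ).const_mul
    (σ * (1 + σ))
  calc _ ≤ ∫ t in Ioi 0, ‖(σ ^ 2 * (t ^ (2 * σ - 1) * exp (-(t ^ σ))) -
          σ * (1 + σ) * (t ^ (σ - 1) * exp (-(t ^ σ)))) * sin (ρ * t)‖ :=
        norm_integral_le_integral_norm _
    _ ≤ ∫ t in Ioi 0, (σ ^ 2 * (t ^ (2 * σ - 1) * exp (-(t ^ σ))) +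
          σ * (1 + σ) * (t ^ (σ - 1) * exp (-(t ^ σ)))) := by
      refine setIntegral_mono_on ((integrableOn_exp_neg_rpow_deriv2 hσ).mul_sin ρ).norm
        (hA.add hB) measurableSet_Ioi fun t ht => ?_
      have ht : 0 < t := ht
      rw [norm_mul, Real.norm_eq_abs, Real.norm_eq_abs]
      refine (mul_le_of_le_one_right (abs_nonneg _) (abs_sin_le_one _)).trans ?_
      refine (abs_sub _ _).trans_eq ?_
      rw [abs_of_nonneg (by positivity), abs_of_nonneg (by positivity)]
    _ = 1 + 2 * σ := by
      rw [integral_add hA hB, integral_const_mul, integral_const_mul,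
        integral_rpow_mul_exp_neg_rpow hσ (by linarith),
        integral_rpow_mul_exp_neg_rpow hσ (by linarith),
        show (2 * σ - 1 + 1) / σ = 2 by field_simp; ring,
        show (σ - 1 + 1) / σ = 1 by rw [sub_add_cancel, div_self hσ.ne'],
        Real.Gamma_two, Real.Gamma_one]
      field_simp
      ring

theorem sq_mul_integral_exp_neg_rpow_mul_self_mul_sin_le (hσ : 0 < σ) (ρ : ℝ) :
    ρ ^ 2 * ∫ t in Ioi 0, exp (-(t ^ σ)) * t * sin (ρ * t) ≤ 1 + 2 * σ := by
  have hpow : Continuous fun t : ℝ => t ^ σ := continuous_rpow_const hσ.le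
  have hf_top := (tendsto_rpow_mul_exp_neg_rpow_atTop 1 hσ).congr fun t => by
    rw [rpow_one, mul_comm]
  have hf'_top : Tendsto (fun t => exp (-(t ^ σ)) * (1 - σ * t ^ σ)) atTop (𝓝 0) := by
    simpa only [mul_zero, sub_zero] using ((tendsto_rpow_mul_exp_neg_rpow_atTop 0 hσ).sub
      ((tendsto_rpow_mul_exp_neg_rpow_atTop σ hσ).const_mul σ)).congr fun t => by
        rw [rpow_zero]; ring
  rw [sq_mul_integral_mul_sin_eq ρ (by fun_prop) (by fun_prop)
    (fun x hx => hasDerivAt_exp_neg_rpow_mul_self hx)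
    (fun x hx => hasDerivAt_exp_neg_rpow_mul_one_sub hx) hf_top hf'_top
    (integrableOn_exp_neg_rpow_mul_self hσ) (integrableOn_exp_neg_rpow_deriv2 hσ),
    mul_zero, mul_zero, zero_sub]
  exact (neg_le_abs _).trans (abs_integral_exp_neg_rpow_deriv2_mul_sin_le hσ ρ)

end StretchedExponential

/-- there is `C > 0`, independent of `σ ∈ (0,2)` and `ρ > 0`, such that
`ρ² ∫₀^∞ e^{-t^σ} t sin(ρt) dt ≤ C`, the improper integral converging. -/
theorem stmt7 :
    ∃ C : ℝ, 0 < C ∧ ∀ σ ∈ Ioo (0:ℝ) 2, ∀ ρ : ℝ, 0 < ρ →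
      IntegrableOn (fun t : ℝ => Real.exp (-(t ^ σ)) * t * Real.sin (ρ * t)) (Ioi 0) ∧
      ρ^2 * (∫ t in Ioi (0:ℝ), Real.exp (-(t ^ σ)) * t * Real.sin (ρ * t)) ≤ C := by
  refine ⟨5, by norm_num, fun σ ⟨hσ0, hσ2⟩ ρ _ => ⟨?_, ?_⟩⟩
  · exact (integrableOn_exp_neg_rpow_mul_self hσ0).mul_sin ρ
  · linarith [sq_mul_integral_exp_neg_rpow_mul_self_mul_sin_le hσ0 ρ]
end

section
/- Fix 0 < γ < 1 and σ > 0, and suppose for each α ∈ (0,1) a Markov kernel K_α on ℝⁿ satisfies: (stability) for each α there is R(α) > 0 with K_α(x,z) ≤ 2α |x-z|^{-(n+σ)} whenever |x-z| ≥ R(α); and (Harnack) sup_{z ∈ B(ξ, γ|x-ξ|)} K_α(x,z) ≤ ((1+γ)/(1-γ))^{n+σ} inf_{z ∈ B(ξ, γ|x-ξ|)} K_α(x,z) for all x ≠ ξ. Then for every λ > 0 and every x ∈ ℝⁿ, ∫_{|x-z| ≥ λ} K_α(x,z) dz ≤ (2ω_n/σ) α + 2ω_n α ((1+γ)/(1-γ))^n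 · (1+γ)^σ/((1+γ)^σ - (1-γ)^σ) · λ^{-σ}; in particular the family concentrates about the diagonal as α → 0. -/
set_option maxHeartbeats 1000000

open MeasureTheory Real Filter Set Metric

section helpers

/-- One Harnack propagation step: a bound on the annulus `(r, Mr)` propagates to `(θr, r]`. -/
private lemma harnack_step (n : ℕ) (γ σ : ℝ) (hγ0 : 0 < γ) (hγ1 : γ < 1)
    (f : EuclideanSpace ℝ (Fin n) → ℝ) (x : EuclideanSpace ℝ (Fin n))
    (hh : ∀ ξ, ξ ≠ x → ∀ z₁ ∈ ball ξ (γ * ‖x - ξ‖), ∀ z₂ ∈ ball ξ (γ * ‖x - ξ‖),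
        f z₁ ≤ ((1+γ)/(1-γ)) ^ ((n:ℝ) + σ) * f z₂)
    (r C : ℝ) (hr : 0 < r)
    (hC : ∀ w, r < ‖x - w‖ → ‖x - w‖ < (1+γ)/(1-γ) * r → f w ≤ C) :
    ∀ z, (1-γ)/(1+γ) * r < ‖x - z‖ → ‖x - z‖ ≤ r →
      f z ≤ ((1+γ)/(1-γ)) ^ ((n:ℝ) + σ) * C := by
  intro z h1 h2
  have h1γ : (0:ℝ) < 1 - γ := by linarith
  have h2γ : (0:ℝ) < 1 + γ := by linarith
  set ρ := ‖x - z‖ with hρdef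
  have hρ0 : 0 < ρ := lt_of_le_of_lt (by positivity) h1
  have hbase : (1-γ) * r < (1+γ) * ρ := by
    have h' := mul_lt_mul_of_pos_right h1 h2γ
    have he : (1-γ)/(1+γ) * r * (1+γ) = (1-γ) * r := by field_simp
    nlinarith [h']
  have hlt : r/(1+γ) < ρ/(1-γ) := by
    rw [div_lt_div_iff₀ h2γ h1γ]; nlinarith
  set d : ℝ := (r/(1+γ) + ρ/(1-γ))/2 with hddef
  have hd_lo : r/(1+γ) < d := by rw [hddef]; linarith
  have hd_hi : d < ρ/(1-γ) := by rw [hddef]; linarith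
  have hd1 : r < d * (1+γ) := (div_lt_iff₀ h2γ).mp hd_lo
  have hd2 : d * (1-γ) < ρ := (lt_div_iff₀ h1γ).mp hd_hi
  have hd0 : 0 < d := lt_trans (by positivity) hd_lo
  set s : ℝ := (r + d*(1+γ))/2 with hsdef
  have hs1 : r < s := by rw [hsdef]; linarith
  have hs2 : s < d * (1+γ) := by rw [hsdef]; linarith
  have hs3 : d * (1-γ) < s := by linarith
  have hs0 : 0 < s := lt_trans hr hs1
  have hs4 : s < (1+γ)/(1-γ) * r := by
    rw [div_mul_eq_mul_div, lt_div_iff₀ h1γ]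
    nlinarith
  -- points on the ray from x through z
  set p : ℝ → EuclideanSpace ℝ (Fin n) := fun t => x + (t/ρ) • (z - x) with hpdef
  have hdiff : ∀ a b : ℝ, p a - p b = ((a - b)/ρ) • (z - x) := by
    intro a b
    simp only [hpdef]
    rw [add_sub_add_left_eq_sub, ← sub_smul]
    congr 1
    field_simp
  have hdist : ∀ a b : ℝ, dist (p a) (p b) = |a - b| := by
    intro a b
    rw [dist_eq_norm, hdiff, norm_smul, norm_sub_rev, ← hρdef,
      Real.norm_eq_abs, abs_div, abs_of_pos hρ0]
    field_simp
  have hxnorm : ∀ t : ℝ, 0 ≤ t → ‖x - p t‖ = t := by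
    intro t ht
    have hx0 : x = p 0 := by simp [hpdef]
    calc ‖x - p t‖ = dist (p 0) (p t) := by rw [dist_eq_norm, ← hx0]
    _ = |0 - t| := hdist 0 t
    _ = t := by rw [zero_sub, abs_neg, abs_of_nonneg ht]
  have hzp : p ρ = z := by
    simp only [hpdef, div_self hρ0.ne', one_smul]
    abel
  set ξ := p d with hξdef
  have hxξ : ‖x - ξ‖ = d := hxnorm d hd0.le
  have hξx : ξ ≠ x := by
    intro h
    rw [h] at hxξ
    simp at hxξ
    exact hd0.ne' hxξ.symm
  have hz_mem : z ∈ ball ξ (γ * ‖x - ξ‖) := by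
    rw [mem_ball, hxξ, ← hzp, hdist]
    rw [abs_sub_lt_iff]
    constructor <;> nlinarith
  have hz2_mem : p s ∈ ball ξ (γ * ‖x - ξ‖) := by
    rw [mem_ball, hxξ, hdist, abs_sub_lt_iff]
    constructor <;> nlinarith
  have hfz2 : f (p s) ≤ C := by
    apply hC
    · rw [hxnorm s hs0.le]; exact hs1
    · rw [hxnorm s hs0.le]; exact hs4
  have hM : (0:ℝ) ≤ ((1+γ)/(1-γ)) ^ ((n:ℝ) + σ) := Real.rpow_nonneg (by positivity) _
  calc f z ≤ ((1+γ)/(1-γ)) ^ ((n:ℝ) + σ) * f (p s) := hh ξ hξx z hz_mem (p s) hz2_mem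
  _ ≤ ((1+γ)/(1-γ)) ^ ((n:ℝ) + σ) * C := mul_le_mul_of_nonneg_left hfz2 hM

end helpers

section helpers2

private lemma annulus_bound (n : ℕ) (γ σ : ℝ) (hγ0 : 0 < γ) (hγ1 : γ < 1)
    (f : EuclideanSpace ℝ (Fin n) → ℝ) (x : EuclideanSpace ℝ (Fin n))
    (hh : ∀ ξ, ξ ≠ x → ∀ z₁ ∈ ball ξ (γ * ‖x - ξ‖), ∀ z₂ ∈ ball ξ (γ * ‖x - ξ‖),
        f z₁ ≤ ((1+γ)/(1-γ)) ^ ((n:ℝ) + σ) * f z₂)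
    (R D : ℝ) (hR : 0 < R)
    (hbase : ∀ w, R < ‖x - w‖ → f w ≤ D) :
    ∀ j : ℕ, ∀ z, ((1-γ)/(1+γ))^(j+1) * R < ‖x - z‖ → ‖x - z‖ ≤ ((1-γ)/(1+γ))^j * R →
      f z ≤ (((1+γ)/(1-γ)) ^ ((n:ℝ) + σ))^(j+1) * D := by
  have h1γ : (0:ℝ) < 1 - γ := by linarith
  have h2γ : (0:ℝ) < 1 + γ := by linarith
  have hθ0 : (0:ℝ) < (1-γ)/(1+γ) := by positivity
  have hMθ : (1+γ)/(1-γ) * ((1-γ)/(1+γ)) = 1 := by field_simp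
  intro j
  induction j with
  | zero =>
    intro z h1 h2
    have := harnack_step n γ σ hγ0 hγ1 f x hh R D hR
      (fun w hw _ => hbase w hw) z (by rw [pow_one] at h1; exact h1) (by rw [pow_zero, one_mul] at h2; exact h2)
    rw [pow_one]
    exact this
  | succ j ih =>
    intro z h1 h2
    have hstep := harnack_step n γ σ hγ0 hγ1 f x hh (((1-γ)/(1+γ))^(j+1) * R)
      ((((1+γ)/(1-γ)) ^ ((n:ℝ) + σ))^(j+1) * D) (by positivity)
      (fun w hw1 hw2 => ih w hw1 (by
        have : (1+γ)/(1-γ) * (((1-γ)/(1+γ))^(j+1) * R) = ((1-γ)/(1+γ))^j * R := by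
          rw [pow_succ]; field_simp
        rw [this] at hw2
        exact hw2.le))
    have h1' : (1-γ)/(1+γ) * (((1-γ)/(1+γ))^(j+1) * R) < ‖x - z‖ := by
      rw [← mul_assoc, ← pow_succ']
      exact h1
    have := hstep z h1' h2
    calc f z ≤ ((1+γ)/(1-γ)) ^ ((n:ℝ) + σ) * ((((1+γ)/(1-γ)) ^ ((n:ℝ) + σ))^(j+1) * D) := this
    _ = (((1+γ)/(1-γ)) ^ ((n:ℝ) + σ))^(j+1+1) * D := by ring

private lemma ptwise_bound (n : ℕ) (γ σ : ℝ) (hγ0 : 0 < γ) (hγ1 : γ < 1) (hσ : 0 < σ)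
    (f : EuclideanSpace ℝ (Fin n) → ℝ) (x : EuclideanSpace ℝ (Fin n)) (α R : ℝ)
    (hα : 0 < α) (hR : 0 < R)
    (hh : ∀ ξ, ξ ≠ x → ∀ z₁ ∈ ball ξ (γ * ‖x - ξ‖), ∀ z₂ ∈ ball ξ (γ * ‖x - ξ‖),
        f z₁ ≤ ((1+γ)/(1-γ)) ^ ((n:ℝ) + σ) * f z₂)
    (hstab : ∀ w, R ≤ ‖x - w‖ → f w ≤ 2*α*‖x - w‖ ^ (-((n:ℝ)+σ))) :
    ∀ z, z ≠ x → f z ≤ 2*α*‖x - z‖ ^ (-((n:ℝ)+σ)) := by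
  have h1γ : (0:ℝ) < 1 - γ := by linarith
  have h2γ : (0:ℝ) < 1 + γ := by linarith
  set θ : ℝ := (1-γ)/(1+γ) with hθdef
  set M : ℝ := (1+γ)/(1-γ) with hMdef
  have hθ0 : 0 < θ := by positivity
  have hM0 : 0 < M := by positivity
  have hθ1 : θ < 1 := by rw [hθdef, div_lt_one h2γ]; linarith
  have hM1 : 1 < M := by rw [hMdef, lt_div_iff₀ h1γ]; linarith
  have hMθ : M * θ = 1 := by rw [hMdef, hθdef]; field_simp
  intro z hz
  have hρ0 : 0 < ‖x - z‖ := by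
    rw [norm_pos_iff, sub_ne_zero]
    exact fun h => hz h.symm
  set ρ := ‖x - z‖ with hρdef
  -- approximate bound for every s in (θρ, ρ)
  have key : ∀ s, s ∈ Ioo (θ*ρ) ρ → f z ≤ 2*α*s ^ (-((n:ℝ)+σ)) := by
    intro s hs
    have hs0 : 0 < s := lt_of_le_of_lt (by positivity) hs.1
    obtain ⟨j, hj⟩ := pow_unbounded_of_one_lt (R/s) hM1
    set R' : ℝ := s * M^(j+1) with hR'def
    have hR'0 : 0 < R' := by positivity
    have hRR' : R < R' := by
      rw [hR'def, pow_succ]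
      calc R = R/s * s := by field_simp
      _ < M^j * s := by exact mul_lt_mul_of_pos_right hj hs0
      _ ≤ M^j * M * s := by nlinarith [mul_pos (pow_pos hM0 j) hs0]
      _ = s * (M^j * M) := by ring
    have hbase : ∀ w, R' < ‖x - w‖ → f w ≤ 2*α*R' ^ (-((n:ℝ)+σ)) := by
      intro w hw
      have h1 := hstab w (le_trans hRR'.le hw.le)
      refine h1.trans ?_
      have : ‖x - w‖ ^ (-((n:ℝ)+σ)) ≤ R' ^ (-((n:ℝ)+σ)) :=
        Real.rpow_le_rpow_of_nonpos hR'0 hw.le (by push_cast; linarith)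
      nlinarith [this]
    have hθMj : ∀ k : ℕ, θ^k * M^k = 1 := by
      intro k
      rw [← mul_pow, mul_comm θ M, hMθ, one_pow]
    have hann := annulus_bound n γ σ hγ0 hγ1 f x hh R' (2*α*R' ^ (-((n:ℝ)+σ))) hR'0 hbase j z
    have hzin1 : θ^(j+1) * R' < ρ := by
      have : θ^(j+1) * R' = s := by
        rw [hR'def, ← mul_assoc, mul_comm (θ^(j+1)) s, mul_assoc, hθMj (j+1), mul_one]
      rw [this]; exact hs.2
    have hzin2 : ρ ≤ θ^j * R' := by
      have : θ^j * R' = s * M := by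
        rw [hR'def, pow_succ, ← mul_assoc, mul_comm (θ^j) s, mul_assoc, ← mul_assoc (θ^j), hθMj j, one_mul]
      rw [this]
      calc ρ = M * (θ * ρ) := by rw [← mul_assoc, hMθ, one_mul]
      _ ≤ M * s := by nlinarith [hs.1]
      _ = s * M := mul_comm M s
    have := hann hzin1 hzin2
    refine this.trans ?_
    -- (M^(n+σ))^(j+1) * (2α R'^-(n+σ)) = 2α s^-(n+σ)
    have hcalc : ((M ^ ((n:ℝ)+σ))^(j+1) : ℝ) * (2*α*R' ^ (-((n:ℝ)+σ))) = 2*α*s ^ (-((n:ℝ)+σ)) := by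
      have e1 : ((M ^ ((n:ℝ)+σ))^(j+1) : ℝ) = ((M^(j+1) : ℝ)) ^ ((n:ℝ)+σ) := by
        rw [← Real.rpow_natCast (M ^ ((n:ℝ)+σ)) (j+1), ← Real.rpow_natCast M (j+1),
          ← Real.rpow_mul hM0.le, ← Real.rpow_mul hM0.le, mul_comm]
      have e2 : R' ^ (-((n:ℝ)+σ)) = s ^ (-((n:ℝ)+σ)) * ((M^(j+1):ℝ)) ^ (-((n:ℝ)+σ)) := by
        rw [hR'def, Real.mul_rpow hs0.le (by positivity)]
      have e3 : ((M^(j+1) : ℝ)) ^ ((n:ℝ)+σ) * ((M^(j+1):ℝ)) ^ (-((n:ℝ)+σ)) = 1 := by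
        rw [← Real.rpow_add (by positivity), add_neg_cancel, Real.rpow_zero]
      calc ((M ^ ((n:ℝ)+σ))^(j+1) : ℝ) * (2*α*R' ^ (-((n:ℝ)+σ)))
          = 2*α* (s ^ (-((n:ℝ)+σ)) * (((M^(j+1) : ℝ)) ^ ((n:ℝ)+σ) * ((M^(j+1):ℝ)) ^ (-((n:ℝ)+σ)))) := by
            rw [e1, e2]; ring
      _ = 2*α*s ^ (-((n:ℝ)+σ)) := by rw [e3, mul_one]
    rw [hcalc]
  -- take the limit s → ρ⁻
  have hcont : ContinuousAt (fun s : ℝ => 2*α*s ^ (-((n:ℝ)+σ))) ρ :=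
    continuousAt_const.mul (Real.continuousAt_rpow_const ρ _ (Or.inl hρ0.ne'))
  have hlim : Tendsto (fun s : ℝ => 2*α*s ^ (-((n:ℝ)+σ))) (nhdsWithin ρ (Iio ρ))
      (nhds (2*α*ρ ^ (-((n:ℝ)+σ)))) :=
    hcont.tendsto.mono_left nhdsWithin_le_nhds
  have hmem : Ioo (θ*ρ) ρ ∈ nhdsWithin ρ (Iio ρ) := by
    apply Ioo_mem_nhdsLT_of_mem
    constructor
    · nlinarith
    · exact le_refl ρ
  refine ge_of_tendsto hlim ?_
  filter_upwards [hmem] with s hs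
  exact key s hs

end helpers2

/-- Harnack plus stability imply the explicit tail bound and hence
concentration about the diagonal for a family of Markov kernels on `ℝⁿ`. -/
theorem stmt14 (n : ℕ) (hn : 1 ≤ n) (γ σ : ℝ) (hγ : γ ∈ Ioo (0:ℝ) 1) (hσ : 0 < σ)
    (ω : ℝ)
    (hω : ω = (n : ℝ) * (volume (Metric.ball (0 : EuclideanSpace ℝ (Fin n)) 1)).toReal)
    (K : ℝ → EuclideanSpace ℝ (Fin n) → EuclideanSpace ℝ (Fin n) → ℝ)
    (hKnn : ∀ α ∈ Ioo (0:ℝ) 1, ∀ x z, 0 ≤ K α x z)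
    (hKmeas : ∀ α ∈ Ioo (0:ℝ) 1, ∀ x, Measurable (K α x))
    (hKmarkov : ∀ α ∈ Ioo (0:ℝ) 1, ∀ x, ∫ z, K α x z = 1)
    (hstab : ∀ α ∈ Ioo (0:ℝ) 1, ∃ R : ℝ, 0 < R ∧ ∀ x z,
      R ≤ ‖x - z‖ → K α x z ≤ 2 * α * ‖x - z‖ ^ (-((n:ℝ) + σ)))
    (hharnack : ∀ α ∈ Ioo (0:ℝ) 1, ∀ x ξ : EuclideanSpace ℝ (Fin n), ξ ≠ x →
      ∀ z₁ ∈ ball ξ (γ * ‖x - ξ‖), ∀ z₂ ∈ ball ξ (γ * ‖x - ξ‖),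
        K α x z₁ ≤ ((1+γ)/(1-γ)) ^ ((n:ℝ) + σ) * K α x z₂) :
    (∀ α ∈ Ioo (0:ℝ) 1, ∀ lam : ℝ, 0 < lam → ∀ x,
      (∫ z in {z : EuclideanSpace ℝ (Fin n) | lam ≤ ‖x - z‖}, K α x z)
        ≤ (2 * ω / σ) * α
          + 2 * ω * α * ((1+γ)/(1-γ)) ^ (n:ℝ)
            * ((1+γ) ^ σ / ((1+γ) ^ σ - (1-γ) ^ σ)) * lam ^ (-σ)) ∧
    (∀ lam : ℝ, 0 < lam → ∀ ε : ℝ, 0 < ε → ∃ α₀ ∈ Ioo (0:ℝ) 1,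
      ∀ α ∈ Ioo (0:ℝ) α₀, ∀ x,
        (∫ z in {z : EuclideanSpace ℝ (Fin n) | lam ≤ ‖x - z‖}, K α x z) ≤ ε) := by
  obtain ⟨hγ0, hγ1⟩ := hγ
  have h1γ : (0:ℝ) < 1 - γ := by linarith
  have h2γ : (0:ℝ) < 1 + γ := by linarith
  have hθ0 : (0:ℝ) < (1-γ)/(1+γ) := by positivity
  have hM0 : (0:ℝ) < (1+γ)/(1-γ) := by positivity
  have hθ1 : (1-γ)/(1+γ) < 1 := by rw [div_lt_one h2γ]; linarith
  have hM1 : (1:ℝ) < (1+γ)/(1-γ) := by rw [lt_div_iff₀ h1γ]; linarith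
  set v : ℝ := (volume (Metric.ball (0 : EuclideanSpace ℝ (Fin n)) 1)).toReal with hvdef
  have hv0 : 0 ≤ v := ENNReal.toReal_nonneg
  have hballv : volume (Metric.ball (0 : EuclideanSpace ℝ (Fin n)) 1) = ENNReal.ofReal v :=
    (ENNReal.ofReal_toReal measure_ball_lt_top.ne).symm
  have hrplt : (1-γ)^σ < (1+γ)^σ := Real.rpow_lt_rpow h1γ.le (by linarith) hσ
  have hrp1 : (0:ℝ) < (1+γ)^σ := Real.rpow_pos_of_pos h2γ σ
  have hrp2 : (0:ℝ) < (1-γ)^σ := Real.rpow_pos_of_pos h1γ σ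
  have hqs0 : (0:ℝ) ≤ ((1-γ)/(1+γ))^σ := Real.rpow_nonneg hθ0.le σ
  have hqs1 : ((1-γ)/(1+γ))^σ < 1 := Real.rpow_lt_one hθ0.le hθ1 hσ
  have hden : (1+γ)^σ - (1-γ)^σ ≠ 0 := sub_ne_zero.mpr hrplt.ne'
  have hQ : ((1+γ)^σ / ((1+γ)^σ - (1-γ)^σ)) = (1 - ((1-γ)/(1+γ))^σ)⁻¹ := by
    rw [Real.div_rpow h1γ.le h2γ.le]
    have h2 : 1 - (1-γ)^σ/(1+γ)^σ = ((1+γ)^σ - (1-γ)^σ)/(1+γ)^σ := by field_simp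
    rw [h2, inv_div]
  have hω0 : 0 ≤ ω := by rw [hω]; positivity
  have hn1 : (1:ℝ) ≤ (n:ℝ) := by exact_mod_cast hn
  have main : ∀ α ∈ Ioo (0:ℝ) 1, ∀ lam : ℝ, 0 < lam → ∀ x,
      (∫ z in {z : EuclideanSpace ℝ (Fin n) | lam ≤ ‖x - z‖}, K α x z)
        ≤ (2 * ω / σ) * α
          + 2 * ω * α * ((1+γ)/(1-γ)) ^ (n:ℝ)
            * ((1+γ) ^ σ / ((1+γ) ^ σ - (1-γ) ^ σ)) * lam ^ (-σ) := by
    intro α hα lam hlam x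
    obtain ⟨R, hR0, hRstab⟩ := hstab α hα
    have hα0 : 0 < α := hα.1
    have hpt : ∀ z, z ≠ x → K α x z ≤ 2*α*‖x - z‖ ^ (-((n:ℝ)+σ)) :=
      ptwise_bound n γ σ hγ0 hγ1 hσ (K α x) x α R hα0 hR0
        (fun ξ hξ => hharnack α hα x ξ hξ) (fun w hw => hRstab x w hw)
    set M : ℝ := (1+γ)/(1-γ) with hMdef
    set A : ℝ := (n:ℝ) + σ with hAdef
    set qs : ℝ := ((1-γ)/(1+γ))^σ with hqsdef
    set c0 : ℝ := 2*α*v*(M^n)*lam^(-σ) with hc0def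
    set Z : ℕ → Set (EuclideanSpace ℝ (Fin n)) :=
      fun j => Metric.closedBall x (lam * M^(j+1)) \ Metric.ball x (lam * M^j) with hZdef
    have hMpow0 : ∀ j : ℕ, (0:ℝ) < lam * M^j := fun j => by positivity
    have hcover : {z : EuclideanSpace ℝ (Fin n) | lam ≤ ‖x - z‖} ⊆ ⋃ j, Z j := by
      intro z hz
      simp only [mem_setOf_eq] at hz
      have hdz : lam ≤ dist z x := by rw [dist_eq_norm, norm_sub_rev]; exact hz
      have hex : ∃ k : ℕ, dist z x ≤ lam * M^(k+1) := by
        obtain ⟨k, hk⟩ := pow_unbounded_of_one_lt (dist z x / lam) hM1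
        refine ⟨k, ?_⟩
        rw [div_lt_iff₀ hlam] at hk
        have hmono : (M:ℝ)^k ≤ M^(k+1) := pow_le_pow_right₀ hM1.le (Nat.le_succ k)
        nlinarith [hmono]
      set j := Nat.find hex with hjdef
      have hj1 : dist z x ≤ lam * M^(j+1) := Nat.find_spec hex
      have hj2 : ¬ (dist z x < lam * M^j) := by
        intro hlt
        rcases Nat.eq_zero_or_pos j with h0 | hpos
        · rw [h0] at hlt; simp only [pow_zero, mul_one] at hlt; linarith
        · have hk : j - 1 < j := Nat.sub_lt hpos one_pos
          apply Nat.find_min hex hk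
          have hsucc : j - 1 + 1 = j := Nat.succ_pred_eq_of_pos hpos
          rw [hsucc]
          exact hlt.le
      exact mem_iUnion.mpr ⟨j, ⟨mem_closedBall.mpr hj1, fun hb => hj2 (mem_ball.mp hb)⟩⟩
    have halg : ∀ j : ℕ, (2*α*(lam*M^j) ^ (-A)) * ((lam*M^(j+1))^n * v) = c0 * qs^j := by
      intro j
      have e1 : (lam*M^j) ^ (-A) = lam ^ (-A) * M ^ ((j:ℝ) * (-A)) := by
        rw [Real.mul_rpow hlam.le (pow_nonneg hM0.le j), ← Real.rpow_natCast M j,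
          ← Real.rpow_mul hM0.le]
      have e2 : ((lam*M^(j+1)):ℝ)^n = lam ^ ((n:ℝ)) * M ^ (((j:ℝ)+1) * (n:ℝ)) := by
        rw [mul_pow, ← Real.rpow_natCast lam n, ← pow_mul, ← Real.rpow_natCast M ((j+1)*n)]
        congr 1
        push_cast
        ring
      have e3 : qs ^ j = M ^ ((j:ℝ) * (-σ)) := by
        have hqsM : qs = M ^ (-σ) := by
          rw [hqsdef, show (1-γ)/(1+γ) = M⁻¹ by rw [hMdef, inv_div],
            Real.inv_rpow hM0.le, ← Real.rpow_neg hM0.le]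
        rw [hqsM, ← Real.rpow_natCast (M ^ (-σ)) j, ← Real.rpow_mul hM0.le, mul_comm]
      have f1 : lam ^ (-A) * lam ^ ((n:ℝ)) = lam ^ (-σ) := by
        rw [← Real.rpow_add hlam]
        congr 1
        rw [hAdef]; ring
      have f2 : M ^ ((j:ℝ)*(-A)) * M ^ (((j:ℝ)+1)*(n:ℝ)) = M ^ ((n:ℝ)) * M ^ ((j:ℝ)*(-σ)) := by
        rw [← Real.rpow_add hM0, ← Real.rpow_add hM0]
        congr 1
        rw [hAdef]; ring
      have hMn : (M:ℝ)^n = M ^ ((n:ℝ)) := (Real.rpow_natCast M n).symm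
      rw [e1, e2, e3, hc0def, hMn]
      have : 2*α*(lam ^ (-A) * M ^ ((j:ℝ) * (-A))) * (lam ^ ((n:ℝ)) * M ^ (((j:ℝ)+1) * (n:ℝ)) * v)
          = 2*α*v*((lam ^ (-A) * lam ^ ((n:ℝ))) * (M ^ ((j:ℝ)*(-A)) * M ^ (((j:ℝ)+1)*(n:ℝ)))) := by
        ring
      rw [this, f1, f2]
      ring
    have hZint : ∀ j : ℕ, (∫⁻ z in Z j, ENNReal.ofReal (K α x z)) ≤ ENNReal.ofReal (c0 * qs^j) := by
      intro j
      have hcj0 : (0:ℝ) ≤ 2*α*(lam*M^j) ^ (-A) := by positivity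
      have hptj : ∀ z ∈ Z j, K α x z ≤ 2*α*(lam*M^j) ^ (-A) := by
        intro z hzj
        have hzd : lam * M^j ≤ ‖x - z‖ := by
          have h2 := hzj.2
          rw [mem_ball] at h2
          push_neg at h2
          rwa [dist_eq_norm, norm_sub_rev] at h2
        have hzx : z ≠ x := by
          intro h
          rw [h] at hzd
          simp only [sub_self, norm_zero] at hzd
          nlinarith [hMpow0 j]
        refine (hpt z hzx).trans ?_
        have hmono : ‖x - z‖ ^ (-A) ≤ (lam*M^j) ^ (-A) :=
          Real.rpow_le_rpow_of_nonpos (hMpow0 j) hzd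
            (by
              have hcast : (0:ℝ) ≤ (n:ℝ) := Nat.cast_nonneg n
              rw [hAdef]; linarith)
        nlinarith [hmono, hα0]
      calc (∫⁻ z in Z j, ENNReal.ofReal (K α x z))
          ≤ ∫⁻ _ in Z j, ENNReal.ofReal (2*α*(lam*M^j) ^ (-A)) :=
            setLIntegral_mono' (measurableSet_closedBall.diff measurableSet_ball)
              (fun z hzj => ENNReal.ofReal_le_ofReal (hptj z hzj))
        _ = ENNReal.ofReal (2*α*(lam*M^j) ^ (-A)) * volume (Z j) := setLIntegral_const _ _
        _ ≤ ENNReal.ofReal (2*α*(lam*M^j) ^ (-A)) * volume (Metric.closedBall x (lam * M^(j+1))) :=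
            mul_le_mul_right (measure_mono diff_subset) _
        _ = ENNReal.ofReal (2*α*(lam*M^j) ^ (-A)) *
              (ENNReal.ofReal ((lam*M^(j+1)) ^ n) * ENNReal.ofReal v) := by
            rw [Measure.addHaar_closedBall volume x (by positivity : (0:ℝ) ≤ lam * M^(j+1)),
              finrank_euclideanSpace_fin, hballv]
        _ = ENNReal.ofReal ((2*α*(lam*M^j) ^ (-A)) * ((lam*M^(j+1)) ^ n * v)) := by
            rw [← ENNReal.ofReal_mul (by positivity : (0:ℝ) ≤ ((lam*M^(j+1)) ^ n : ℝ)),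
              ← ENNReal.ofReal_mul hcj0]
        _ ≤ ENNReal.ofReal (c0 * qs^j) := ENNReal.ofReal_le_ofReal (le_of_eq (halg j))
    have hP0 : (0:ℝ) ≤ 2*α*(M^n)*lam^(-σ)*(1-qs)⁻¹ := by
      have h1 : (0:ℝ) < 1 - qs := by linarith [hqs1]
      have h2 : (0:ℝ) ≤ (1-qs)⁻¹ := (inv_nonneg).mpr h1.le
      have h3 : (0:ℝ) ≤ 2*α*(M^n)*lam^(-σ) := by positivity
      exact mul_nonneg h3 h2
    have hfinalreal : c0 * (1-qs)⁻¹ ≤ (2 * ω / σ) * α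
          + 2 * ω * α * M ^ ((n:ℝ)) * ((1+γ) ^ σ / ((1+γ) ^ σ - (1-γ) ^ σ)) * lam ^ (-σ) := by
      have hterm2 : 2 * ω * α * M ^ ((n:ℝ)) * ((1+γ) ^ σ / ((1+γ) ^ σ - (1-γ) ^ σ)) * lam ^ (-σ)
          = ((n:ℝ)*v) * (2*α*(M^n)*lam^(-σ)*(1-qs)⁻¹) := by
        rw [hQ, hω, ← Real.rpow_natCast M n, hqsdef]
        ring
      have hc0eq : c0 * (1-qs)⁻¹ = v * (2*α*(M^n)*lam^(-σ)*(1-qs)⁻¹) := by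
        rw [hc0def]; ring
      rw [hterm2, hc0eq]
      have h1 : (0:ℝ) ≤ (2 * ω / σ) * α := by positivity
      nlinarith [mul_nonneg (mul_nonneg (by linarith : (0:ℝ) ≤ (n:ℝ) - 1) hv0) hP0]
    have hchain : (∫⁻ z in {z : EuclideanSpace ℝ (Fin n) | lam ≤ ‖x - z‖}, ENNReal.ofReal (K α x z))
        ≤ ENNReal.ofReal ((2 * ω / σ) * α
          + 2 * ω * α * M ^ ((n:ℝ)) * ((1+γ) ^ σ / ((1+γ) ^ σ - (1-γ) ^ σ)) * lam ^ (-σ)) := by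
      calc (∫⁻ z in {z : EuclideanSpace ℝ (Fin n) | lam ≤ ‖x - z‖}, ENNReal.ofReal (K α x z))
          ≤ ∫⁻ z in ⋃ j, Z j, ENNReal.ofReal (K α x z) := lintegral_mono_set hcover
        _ ≤ ∑' j, ∫⁻ z in Z j, ENNReal.ofReal (K α x z) := lintegral_iUnion_le _ _
        _ ≤ ∑' j : ℕ, ENNReal.ofReal (c0 * qs^j) := ENNReal.tsum_le_tsum hZint
        _ = ENNReal.ofReal (∑' j : ℕ, c0 * qs^j) := by
            rw [ENNReal.ofReal_tsum_of_nonneg (fun j => by positivity)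
              ((summable_geometric_of_lt_one hqs0 hqs1).mul_left c0)]
        _ = ENNReal.ofReal (c0 * (1-qs)⁻¹) := by
            rw [tsum_mul_left, tsum_geometric_of_lt_one hqs0 hqs1]
        _ ≤ _ := ENNReal.ofReal_le_ofReal hfinalreal
    have heq : (∫ z in {z : EuclideanSpace ℝ (Fin n) | lam ≤ ‖x - z‖}, K α x z)
        = (∫⁻ z in {z : EuclideanSpace ℝ (Fin n) | lam ≤ ‖x - z‖}, ENNReal.ofReal (K α x z)).toReal :=
      integral_eq_lintegral_of_nonneg_ae (Filter.Eventually.of_forall (fun z => hKnn α hα x z))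
        ((hKmeas α hα x).aestronglyMeasurable)
    rw [heq]
    refine ENNReal.toReal_le_of_le_ofReal ?_ hchain
    have h1 : (0:ℝ) ≤ (2 * ω / σ) * α := by positivity
    have h2 : (0:ℝ) ≤ 2 * ω * α * M ^ ((n:ℝ)) * ((1+γ) ^ σ / ((1+γ) ^ σ - (1-γ) ^ σ)) * lam ^ (-σ) := by
      have hQ0 : (0:ℝ) ≤ (1+γ) ^ σ / ((1+γ) ^ σ - (1-γ) ^ σ) :=
        div_nonneg hrp1.le (by linarith)
      have := Real.rpow_nonneg hM0.le ((n:ℝ))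
      have := Real.rpow_nonneg hlam.le (-σ)
      positivity
    linarith
  refine ⟨main, ?_⟩
  intro lam hlam ε hε
  set C : ℝ := (2 * ω / σ) + 2 * ω * ((1+γ)/(1-γ)) ^ ((n:ℝ))
      * ((1+γ) ^ σ / ((1+γ) ^ σ - (1-γ) ^ σ)) * lam ^ (-σ) with hCdef
  have hC0 : 0 ≤ C := by
    have hQ0 : (0:ℝ) ≤ (1+γ) ^ σ / ((1+γ) ^ σ - (1-γ) ^ σ) := div_nonneg hrp1.le (by linarith)
    have h1 : (0:ℝ) ≤ 2*ω/σ := by positivity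
    have h2 : (0:ℝ) ≤ 2 * ω * ((1+γ)/(1-γ)) ^ ((n:ℝ)) * ((1+γ) ^ σ / ((1+γ) ^ σ - (1-γ) ^ σ)) * lam ^ (-σ) := by
      have := Real.rpow_nonneg hM0.le ((n:ℝ))
      have := Real.rpow_nonneg hlam.le (-σ)
      positivity
    rw [hCdef]; linarith
  refine ⟨min (1/2) (ε/(C+1)), ⟨by positivity, lt_of_le_of_lt (min_le_left _ _) (by norm_num)⟩, ?_⟩
  intro α hα x
  have hα1 : α ∈ Ioo (0:ℝ) 1 := by
    refine ⟨hα.1, lt_of_lt_of_le hα.2 ?_⟩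
    exact le_trans (min_le_left _ _) (by norm_num)
  have hb := main α hα1 lam hlam x
  have hαC : α * (C+1) ≤ ε := by
    have h1 : α ≤ ε/(C+1) := le_trans hα.2.le (min_le_right _ _)
    have h2 : (0:ℝ) < C + 1 := by linarith
    calc α * (C+1) ≤ (ε/(C+1)) * (C+1) := mul_le_mul_of_nonneg_right h1 h2.le
    _ = ε := by field_simp
  calc (∫ z in {z : EuclideanSpace ℝ (Fin n) | lam ≤ ‖x - z‖}, K α x z)
      ≤ (2 * ω / σ) * α + 2 * ω * α * ((1+γ)/(1-γ)) ^ (n:ℝ)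
          * ((1+γ) ^ σ / ((1+γ) ^ σ - (1-γ) ^ σ)) * lam ^ (-σ) := hb
    _ = α * C := by rw [hCdef]; ring
    _ ≤ α * (C+1) := by nlinarith [hα1.1.le]
    _ ≤ ε := hαC
end
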